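/- For every graph G, every vertex v, and every parameter r ∈ ℕ, every eulerian subgraph (element of the cycle space over 𝔽₂) of the ball B_{r/2}(v) is a sum over 𝔽₂ of edge sets of cycles of length at most r contained in B_{r/2}(v). -/

import Mathlib

open SimpleGraph

universe u

namespace LocalSep

variable {V : Type u}

/-- The ball of radius `r/2` around `v`: vertices of distance at most `⌊r/2⌋` from `v`;
if `r` is even, edges joining two vertices of distance exactly `r/2` are removed. -/
def ballVerts (G : SimpleGraph V) (v : V) (r : ℕ) : Set V :=
  {u | G.Reachable v u ∧ G.dist v u ≤ r / 2}

def ball (G : SimpleGraph V) (v : V) (r : ℕ) : G.Subgraph where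
  verts := ballVerts G v r
  Adj u u' := G.Adj u u' ∧ u ∈ ballVerts G v r ∧ u' ∈ ballVerts G v r ∧
    (Even r → ¬(G.dist v u = r / 2 ∧ G.dist v u' = r / 2))
  adj_sub h := h.1
  edge_vert h := h.2.1
  symm := ⟨fun u u' h => ⟨h.1.symm, h.2.2.1, h.2.1, fun he hc => h.2.2.2 he ⟨hc.2, hc.1⟩⟩⟩

/-- `v` is an `r`-local cutvertex if the punctured ball `B_{r/2}(v) - v` is disconnected. -/
def IsLocalCutvertex (G : SimpleGraph V) (r : ℕ) (v : V) : Prop :=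
  ¬ ((ball G v r).deleteVerts {v}).coe.Connected

def HasShortCycle (G : SimpleGraph V) (r : ℕ) : Prop :=
  ∃ (u : V) (c : G.Walk u u), c.IsCycle ∧ c.length ≤ r

/-- A connected graph is `r`-locally 2-connected if it has no `r`-local cutvertex
and contains a cycle of length at most `r`. -/
def LocallyTwoConnected (G : SimpleGraph V) (r : ℕ) : Prop :=
  G.Connected ∧ (∀ v : V, ¬ IsLocalCutvertex G r v) ∧ HasShortCycle G r

/-- The core of `(a₁, a₂)`: all vertices on shortest `a₁`–`a₂` paths. -/
def core (G : SimpleGraph V) (a₁ a₂ : V) : Set V :=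
  {x | ∃ p : G.Walk a₁ a₂, p.IsPath ∧ p.length = G.dist a₁ a₂ ∧ x ∈ p.support}

/-- A walk is contained in a subgraph. -/
def WalkIn {G : SimpleGraph V} (B : G.Subgraph) {x y : V} (p : G.Walk x y) : Prop :=
  p.toSubgraph ≤ B

/-- The label of a vertex `u` in a ball `B`: the set of (supports of) shortest paths
from the core `C` to `u` contained in `B`. -/
def labelIn (G : SimpleGraph V) (B : G.Subgraph) (C : Set V) (u : V) : Set (List V) :=
  {l | ∃ c ∈ C, ∃ p : G.Walk c u, p.IsPath ∧ WalkIn B p ∧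
    (∀ c' ∈ C, ∀ q : G.Walk c' u, q.IsPath → WalkIn B q → p.length ≤ q.length) ∧
    l = p.support}

/-- A potential vertex of the explorer-neighbourhood: a vertex together with a label. -/
abbrev EVert (V : Type u) : Type u := V × Set (List V)

/-- `p` is the copy of the vertex `p.1` in the labelled ball around `a ∈ {a₁, a₂}`. -/
def inCopy (G : SimpleGraph V) (a₁ a₂ : V) (r : ℕ) (a : V) (p : EVert V) : Prop :=
  p.1 ∈ ballVerts G a r ∧ p.2 = labelIn G (ball G a r) (core G a₁ a₂) p.1

/-- Vertices of the explorer-neighbourhood `Expl(a₁,a₂)`. -/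
def explVerts (G : SimpleGraph V) (a₁ a₂ : V) (r : ℕ) : Set (EVert V) :=
  {p | inCopy G a₁ a₂ r a₁ p ∨ inCopy G a₁ a₂ r a₂ p}

/-- The explorer-neighbourhood `Expl(a₁,a₂)`: the union of the two labelled balls,
where two copies of a vertex are identified iff their labels agree. -/
def expl (G : SimpleGraph V) (a₁ a₂ : V) (r : ℕ) : SimpleGraph (EVert V) where
  Adj p q :=
    (inCopy G a₁ a₂ r a₁ p ∧ inCopy G a₁ a₂ r a₁ q ∧ (ball G a₁ r).Adj p.1 q.1) ∨
    (inCopy G a₁ a₂ r a₂ p ∧ inCopy G a₁ a₂ r a₂ q ∧ (ball G a₂ r).Adj p.1 q.1)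
  symm := by
    constructor
    intro p q h
    rcases h with ⟨h1, h2, h3⟩ | ⟨h1, h2, h3⟩
    · exact Or.inl ⟨h2, h1, h3.symm⟩
    · exact Or.inr ⟨h2, h1, h3.symm⟩
  loopless := by
    constructor
    intro p h
    rcases h with ⟨-, -, h⟩ | ⟨-, -, h⟩ <;> exact G.loopless.irrefl _ h.adj_sub

/-- Vertices of the punctured explorer-neighbourhood `Expl(a₁,a₂) - a₁ - a₂`. -/
def pexplVerts (G : SimpleGraph V) (a₁ a₂ : V) (r : ℕ) : Set (EVert V) :=
  {p | p ∈ explVerts G a₁ a₂ r ∧ p.1 ≠ a₁ ∧ p.1 ≠ a₂}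

/-- The punctured explorer-neighbourhood `Expl(a₁,a₂) - a₁ - a₂`. -/
def pexpl (G : SimpleGraph V) (a₁ a₂ : V) (r : ℕ) :
    SimpleGraph (pexplVerts G a₁ a₂ r) :=
  SimpleGraph.induce (pexplVerts G a₁ a₂ r) (expl G a₁ a₂ r)

/-- `{v,w}` is an `r`-local 2-separator: `v,w` have distance at most `r/2` and the
punctured explorer-neighbourhood is disconnected. -/
def IsLocalTwoSep (G : SimpleGraph V) (r : ℕ) (v w : V) : Prop :=
  v ≠ w ∧ G.Reachable v w ∧ 2 * G.dist v w ≤ r ∧ ¬ (pexpl G v w r).Connected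

/-- The pair `(p,q)` of vertices of `Expl(b₁,b₂)` crosses the local 2-separator `{b₁,b₂}`:
they lie in different components of the punctured explorer-neighbourhood and there is a cycle
of length at most `r` through them containing a copy of `b₁` or `b₂`. -/
def CrossesPair (G : SimpleGraph V) (r : ℕ) (b₁ b₂ : V) (p q : EVert V) : Prop :=
  ∃ (hp : p ∈ pexplVerts G b₁ b₂ r) (hq : q ∈ pexplVerts G b₁ b₂ r),
    ¬ (pexpl G b₁ b₂ r).Reachable ⟨p, hp⟩ ⟨q, hq⟩ ∧
    ∃ (u : EVert V) (c : (expl G b₁ b₂ r).Walk u u), c.IsCycle ∧ c.length ≤ r ∧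
      p ∈ c.support ∧ q ∈ c.support ∧ ∃ z ∈ c.support, z.1 = b₁ ∨ z.1 = b₂

/-- `{a₁,a₂}` crosses `{b₁,b₂}`: some copies of `a₁`, `a₂` cross `{b₁,b₂}`. -/
def Crosses (G : SimpleGraph V) (r : ℕ) (a₁ a₂ b₁ b₂ : V) : Prop :=
  ∃ p q : EVert V, p.1 = a₁ ∧ q.1 = a₂ ∧ CrossesPair G r b₁ b₂ p q

/-- Some copy of `x` lies in the same component of `Expl(v,w) - v - w` as some copy of `y`. -/
def CopyReach (G : SimpleGraph V) (r : ℕ) (v w x y : V) : Prop :=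
  ∃ (p q : EVert V) (hp : p ∈ pexplVerts G v w r) (hq : q ∈ pexplVerts G v w r),
    p.1 = x ∧ q.1 = y ∧ (pexpl G v w r).Reachable ⟨p, hp⟩ ⟨q, hq⟩

/-- A cycle through `a₁` alternating between `{a₁,a₂}` and `{b₁,b₂}`: the four vertices are
distinct and `b₁`, `b₂` lie on different arcs of the cycle between `a₁` and `a₂`. -/
def AltCycle (G : SimpleGraph V) (a₁ a₂ b₁ b₂ : V) (c : G.Walk a₁ a₁) : Prop :=
  c.IsCycle ∧ b₁ ≠ b₂ ∧ b₁ ∉ ({a₁, a₂} : Set V) ∧ b₂ ∉ ({a₁, a₂} : Set V) ∧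
  ∃ (p : G.Walk a₁ a₂) (q : G.Walk a₂ a₁), c = p.append q ∧
    ((b₁ ∈ p.support ∧ b₂ ∈ q.support) ∨ (b₂ ∈ p.support ∧ b₁ ∈ q.support))

/-- `S` is generated over `𝔽₂` by members of `C` (sum = symmetric difference). -/
def GeneratedBy {α : Type*} (C : Set (Set (Sym2 α))) (S : Set (Sym2 α)) : Prop :=
  ∃ l : List (Set (Sym2 α)), (∀ A ∈ l, A ∈ C) ∧ l.foldr symmDiff ∅ = S

/-- The edge set of a walk. -/
def walkEdgeSet {α : Type*} {H : SimpleGraph α} {x y : α} (c : H.Walk x y) : Set (Sym2 α) :=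
  {e | e ∈ c.edges}

/-! A cycle `C` in the ball is the sum, over its edges `ab`, of the closed walks going from `v`
to `a` along a geodesic, across `ab`, and back from `b` to `v` along a geodesic: every geodesic
occurs twice and cancels. In the ball `dist v a + dist v b + 1 ≤ r` for every edge `ab` (this is
why edges between two vertices at distance exactly `r/2` are removed when `r` is even), so these
closed walks have length at most `r`. Finally, the edges traversed an odd number of times by a
closed walk of length at most `r` form a sum of cycles of length at most `r`: split the walk at a
repeated vertex into two shorter closed walks. -/

open scoped symmDiff

section GeneratedBy

variable {α : Type*} {C D : Set (Set (Sym2 α))} {S T : Set (Sym2 α)}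

lemma foldr_symmDiff_append (l₁ l₂ : List (Set (Sym2 α))) :
    (l₁ ++ l₂).foldr symmDiff ∅ = l₁.foldr symmDiff ∅ ∆ l₂.foldr symmDiff ∅ := by
  induction l₁ with
  | nil => exact (bot_symmDiff _).symm
  | cons A l ih => rw [List.cons_append, List.foldr_cons, List.foldr_cons, ih, symmDiff_assoc]

lemma GeneratedBy.empty : GeneratedBy C ∅ :=
  ⟨[], by simp, rfl⟩

lemma GeneratedBy.of_mem (h : S ∈ C) : GeneratedBy C S :=
  ⟨[S], by simpa using h, symmDiff_bot S⟩

lemma GeneratedBy.symmDiff (hS : GeneratedBy C S) (hT : GeneratedBy C T) :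
    GeneratedBy C (S ∆ T) := by
  obtain ⟨l₁, hl₁, rfl⟩ := hS
  obtain ⟨l₂, hl₂, rfl⟩ := hT
  refine ⟨l₁ ++ l₂, fun A hA => ?_, foldr_symmDiff_append l₁ l₂⟩
  rcases List.mem_append.mp hA with hA | hA
  exacts [hl₁ A hA, hl₂ A hA]

lemma GeneratedBy.trans (hS : GeneratedBy D S) (h : ∀ T ∈ D, GeneratedBy C T) :
    GeneratedBy C S := by
  obtain ⟨l, hl, rfl⟩ := hS
  induction l with
  | nil => exact .empty
  | cons A l ih =>
    exact (h A (hl A (by simp))).symmDiff (ih fun B hB => hl B (by simp [hB]))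

end GeneratedBy

lemma _root_.SimpleGraph.Walk.exists_eq_append_append_of_not_nodup {α : Type*}
    {H : SimpleGraph α} {a b : α} {p : H.Walk a b} (hp : ¬ p.support.Nodup) :
    ∃ (z : α) (p₁ : H.Walk a z) (c : H.Walk z z) (p₂ : H.Walk z b),
      0 < c.length ∧ p = p₁.append (c.append p₂) := by
  classical
  induction p with
  | nil => simp at hp
  | @cons a a' b h q ih =>
    by_cases ha : a ∈ q.support
    · refine ⟨a, .nil, .cons h (q.takeUntil a ha), q.dropUntil a ha, by simp, ?_⟩
      simp [Walk.cons_append, q.take_spec ha]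
    · obtain ⟨z, p₁, c, p₂, hc, rfl⟩ := ih (by simpa [ha] using hp)
      exact ⟨z, .cons h p₁, c, p₂, hc, rfl⟩

section CycleSpace

variable {α : Type*} {H : SimpleGraph α}

def cycleEdgeSets (H : SimpleGraph α) : Set (Set (Sym2 α)) :=
  {T | ∃ (w : α) (c : H.Walk w w), c.IsCycle ∧ T = walkEdgeSet c}

def shortCycleEdgeSets (H : SimpleGraph α) (r : ℕ) : Set (Set (Sym2 α)) :=
  {T | ∃ (w : α) (c : H.Walk w w), c.IsCycle ∧ c.length ≤ r ∧ T = walkEdgeSet c}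

variable [DecidableEq α]

def oddEdges {x y : α} (p : H.Walk x y) : Set (Sym2 α) :=
  {e | Odd (p.edges.count e)}

@[simp]
lemma oddEdges_nil {x : α} : oddEdges (Walk.nil : H.Walk x x) = ∅ := by
  ext e; simp [oddEdges]

lemma oddEdges_cons {x y z : α} (h : H.Adj x y) (p : H.Walk y z) :
    oddEdges (Walk.cons h p) = {s(x, y)} ∆ oddEdges p := by
  ext e
  by_cases he : e = s(x, y)
  · subst he
    simp [oddEdges, Set.mem_symmDiff, Nat.odd_add_one]
  · simp [oddEdges, Set.mem_symmDiff, List.count_cons, Ne.symm he, he]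

lemma oddEdges_append {x y z : α} (p : H.Walk x y) (q : H.Walk y z) :
    oddEdges (p.append q) = oddEdges p ∆ oddEdges q := by
  ext e
  simp only [oddEdges, Set.mem_ofPred_eq, Walk.edges_append, List.count_append, Set.mem_symmDiff,
    Nat.odd_add, ← Nat.not_odd_iff_even]
  tauto

@[simp]
lemma oddEdges_reverse {x y : α} (p : H.Walk x y) : oddEdges p.reverse = oddEdges p := by
  ext e; simp [oddEdges]

lemma _root_.SimpleGraph.Walk.IsTrail.oddEdges_eq {x y : α} {p : H.Walk x y} (hp : p.IsTrail) :
    oddEdges p = walkEdgeSet p := by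
  ext e
  by_cases he : e ∈ p.edges
  · simp [oddEdges, walkEdgeSet, he, List.count_eq_one_of_mem hp.edges_nodup he]
  · simp [oddEdges, walkEdgeSet, he, List.count_eq_zero_of_not_mem he]

lemma generatedBy_oddEdges_of_length_le {r : ℕ} {u : α} (W : H.Walk u u) (hW : W.length ≤ r) :
    GeneratedBy (shortCycleEdgeSets H r) (oddEdges W) := by
  induction hn : W.length using Nat.strong_induction_on generalizing u with
  | _ n ih =>
  cases W with
  | nil => simpa using GeneratedBy.empty
  | @cons _ b _ h p =>
    by_cases hp : p.support.Nodup
    · replace hp : p.IsPath := (Walk.isPath_def p).mpr hp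
      by_cases he : s(u, b) ∈ p.edges
      · -- `W` goes back and forth along the single edge `ub`
        have hlen := hp.length_eq_one_of_mem_edges (Sym2.eq_swap ▸ he)
        obtain ⟨e, he'⟩ := List.length_eq_one_iff.mp (p.length_edges.trans hlen)
        rw [he', List.mem_singleton] at he
        rw [oddEdges_cons, hp.isTrail.oddEdges_eq]
        simpa [walkEdgeSet, he', he] using GeneratedBy.empty
      · have hc : (Walk.cons h p).IsCycle := (Walk.cons_isCycle_iff p h).mpr ⟨hp, he⟩
        exact .of_mem ⟨u, _, hc, hW, hc.isTrail.oddEdges_eq⟩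
    · obtain ⟨z, p₁, c, p₂, hc, rfl⟩ := p.exists_eq_append_append_of_not_nodup hp
      have hlen : (Walk.cons h (p₁.append (c.append p₂))).length =
          c.length + (Walk.cons h (p₁.append p₂)).length := by
        simp only [Walk.length_cons, Walk.length_append]; omega
      have hodd : oddEdges (Walk.cons h (p₁.append (c.append p₂))) =
          oddEdges c ∆ oddEdges (Walk.cons h (p₁.append p₂)) := by
        simp only [oddEdges_cons, oddEdges_append]
        rw [symmDiff_left_comm (oddEdges c), symmDiff_left_comm (oddEdges c)]
      have hpos : 0 < (Walk.cons h (p₁.append p₂)).length := by simp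
      rw [hodd]
      exact (ih _ (by omega) c (by omega) rfl).symmDiff (ih _ (by omega) _ (by omega) rfl)

section RootedWalks

variable {o : α} {r : ℕ} (g : ∀ x, H.Walk o x)
  (hg : ∀ a b, H.Adj a b → (g a).length + (g b).length + 1 ≤ r)
include hg

lemma generatedBy_oddEdges_append_append_reverse {x y : α} (p : H.Walk x y) :
    GeneratedBy (shortCycleEdgeSets H r) (oddEdges ((g x).append (p.append (g y).reverse))) := by
  induction p with
  | nil => simpa [oddEdges_append] using GeneratedBy.empty
  | @cons x b y h q ih =>
    have htriangle := generatedBy_oddEdges_of_length_le ((g x).append (.cons h (g b).reverse))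
      (by have := hg x b h; simp; omega)
    convert htriangle.symmDiff ih using 1
    simp only [oddEdges_append, oddEdges_cons, oddEdges_reverse, symmDiff_assoc,
      symmDiff_symmDiff_cancel_left]

lemma generatedBy_shortCycleEdgeSets_of_cycleEdgeSets {S : Set (Sym2 α)}
    (hS : GeneratedBy (cycleEdgeSets H) S) : GeneratedBy (shortCycleEdgeSets H r) S := by
  refine hS.trans ?_
  rintro _ ⟨x, c, hc, rfl⟩
  convert generatedBy_oddEdges_append_append_reverse g hg c using 1
  rw [oddEdges_append, oddEdges_append, oddEdges_reverse, symmDiff_comm (oddEdges c),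
    symmDiff_symmDiff_cancel_left, hc.isTrail.oddEdges_eq]

end RootedWalks

end CycleSpace

section Ball

lemma mem_ballVerts_self (G : SimpleGraph V) (v : V) (r : ℕ) : v ∈ ballVerts G v r :=
  ⟨.refl v, by simp⟩

variable {G : SimpleGraph V} {v : V} {r : ℕ}

lemma dist_add_dist_add_one_le_of_ball_adj {a b : V} (h : (ball G v r).Adj a b) :
    G.dist v a + G.dist v b + 1 ≤ r := by
  obtain ⟨-, ⟨-, ha⟩, ⟨-, hb⟩, hne⟩ := h
  rcases Nat.even_or_odd r with hr | hr
  · have := Nat.even_iff.mp hr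
    have := hne hr
    omega
  · have := Nat.odd_iff.mp hr
    omega

lemma _root_.SimpleGraph.exists_adj_dist_eq_of_dist_eq_succ {x : V} {d : ℕ}
    (h : G.dist v x = d + 1) :
    ∃ y, G.Adj y x ∧ G.dist v y = d := by
  obtain ⟨p, hp⟩ :=
    (Reachable.of_dist_ne_zero (by omega : G.dist v x ≠ 0)).exists_walk_length_eq_dist
  have hlen := p.length_reverse
  cases hrev : p.reverse with
  | nil => rw [hrev, Walk.length_nil] at hlen; omega
  | @cons _ y _ hxy q =>
    have hq : q.length = d := by rw [hrev, Walk.length_cons] at hlen; omega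
    have := G.dist_le q.reverse
    rw [Walk.length_reverse] at this
    refine ⟨y, hxy.symm, ?_⟩
    rcases hxy.symm.diff_dist_adj (u := v) with h' | h' | h' <;> omega

lemma exists_ball_walk_length_eq_dist {x : V} (hx : x ∈ ballVerts G v r) :
    ∃ p : (ball G v r).coe.Walk ⟨v, mem_ballVerts_self G v r⟩ ⟨x, hx⟩, p.length = G.dist v x := by
  induction hd : G.dist v x generalizing x with
  | zero =>
    obtain rfl : v = x := hx.1.dist_eq_zero_iff.mp hd
    exact ⟨.nil, rfl⟩
  | succ d ih =>
    obtain ⟨y, hyx, hy⟩ := exists_adj_dist_eq_of_dist_eq_succ hd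
    have hyv : y ∈ ballVerts G v r := ⟨hx.1.trans hyx.symm.reachable, by have := hx.2; omega⟩
    have hadj : (ball G v r).Adj y x := ⟨hyx, hyv, hx, by omega⟩
    obtain ⟨p, hp⟩ := ih hyv hy
    exact ⟨p.concat ((Subgraph.coe_adj _ _ _).mpr hadj), by simp [hp]⟩

end Ball

/-- Every element of the cycle space (eulerian subgraph) of the ball `B_{r/2}(v)` is a sum
over `𝔽₂` of edge sets of cycles of length at most `r` contained in `B_{r/2}(v)`. -/
theorem stmt3 {V : Type u} (G : SimpleGraph V) (v : V) (r : ℕ)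
    (S : Set (Sym2 (ball G v r).verts))
    (hS : GeneratedBy
      {T | ∃ (w : (ball G v r).verts) (d : (ball G v r).coe.Walk w w),
        d.IsCycle ∧ T = walkEdgeSet d} S) :
    GeneratedBy
      {T | ∃ (w : (ball G v r).verts) (d : (ball G v r).coe.Walk w w),
        d.IsCycle ∧ d.length ≤ r ∧ T = walkEdgeSet d} S := by
  classical
  choose g hg using fun x : (ball G v r).verts => exists_ball_walk_length_eq_dist x.2
  refine generatedBy_shortCycleEdgeSets_of_cycleEdgeSets g (fun a b hab => ?_) hS
  rw [hg a, hg b]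
  exact dist_add_dist_add_one_le_of_ball_adj hab

end LocalSep
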